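/- Let f be a homeomorphism of a compact metric space M. Suppose there are an integer n ≥ 1 and a compact set K ⊂ M with f^n(K) = K such that the restriction of f^n to K is topologically conjugate to the full shift on two symbols. Then for every countable set A ⊂ M there exists a nonempty compact f-invariant set K* ⊂ M such that K* ∩ A = ∅, f restricted to K* is minimal, and the topological entropy h(f, K*) is positive. -/

import Mathlib

open Dynamics

/-- Topological entropy of `T` on the subset `F`, defined through maximal cardinalities of
`(n, U)`-separated sets (dynamical nets): `h(T, F) = ⨆ U ∈ 𝓤 X, netEntropyEntourage T F U`.
On a metric space this is the usual entropy
`lim_{ε → 0} limsup_n (1/n) log S(n, ε, F)` via separated sets. -/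
noncomputable def netEntropy {X : Type*} [UniformSpace X] (T : X → X) (F : Set X) : EReal :=
  ⨆ U ∈ uniformity X, netEntropyEntourage T F U

/-- `Λ` is a minimal set for `f`: nonempty, compact, invariant (`f '' Λ = Λ`) and with no
nonempty proper compact invariant subset; equivalently, `f` restricted to `Λ` is minimal. -/
def IsMinimalSet {X : Type*} [TopologicalSpace X] (f : X → X) (Λ : Set X) : Prop :=
  Λ.Nonempty ∧ IsCompact Λ ∧ f '' Λ = Λ ∧
    ∀ Λ' ⊆ Λ, Λ'.Nonempty → IsCompact Λ' → f '' Λ' = Λ' → Λ' = Λ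

/-- The shift map on the full two-sided shift on two symbols `Σ = {0,1}^ℤ`. -/
def shiftMap : (ℤ → Bool) → (ℤ → Bool) := fun x n => x (n + 1)

open scoped ENNReal

namespace ShiftProof

abbrev Word := List Bool

/-- all lists of length `s` with entries in `l` -/
def tuples (l : List Word) : ℕ → List (List Word)
  | 0 => [[]]
  | s+1 => l.flatMap fun a => (tuples l s).map (a :: ·)

lemma mem_tuples {l : List Word} : ∀ {s : ℕ} {f : List Word},
    f ∈ tuples l s ↔ f.length = s ∧ ∀ a ∈ f, a ∈ l := by
  intro s
  induction s with
  | zero => intro f; simp [tuples, List.length_eq_zero_iff]; rintro rfl; simp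
  | succ s ih =>
    intro f
    simp only [tuples, List.mem_flatMap, List.mem_map]
    constructor
    · rintro ⟨a, ha, g, hg, rfl⟩
      obtain ⟨hlen, hmem⟩ := ih.1 hg
      refine ⟨by simp [hlen], ?_⟩
      intro b hb
      rcases List.mem_cons.1 hb with rfl | hb
      · exact ha
      · exact hmem b hb
    · rintro ⟨hlen, hmem⟩
      match f with
      | [] => simp at hlen
      | a :: g =>
        refine ⟨a, hmem a (by simp), g, ih.2 ⟨by simpa using hlen, fun b hb => hmem b (by simp [hb])⟩, rfl⟩

lemma length_tuples (l : List Word) : ∀ s, (tuples l s).length = l.length ^ s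
  | 0 => by simp [tuples]
  | s+1 => by
    rw [tuples, List.length_flatMap]
    have : ∀ a : Word, ((tuples l s).map (a :: ·)).length = l.length ^ s := by
      intro a; rw [List.length_map, length_tuples l s]
    have h2 : (l.map (List.length ∘ fun a => (tuples l s).map (a :: ·))) =
        l.map (fun _ => l.length ^ s) := List.map_congr_left fun a _ => this a
    rw [show (l.map fun a => ((tuples l s).map (a :: ·)).length) = l.map (fun _ => l.length ^ s) from h2, List.map_const', List.sum_replicate, smul_eq_mul, pow_succ]
    ring

lemma nodup_tuples {l : List Word} (hl : l.Nodup) : ∀ s, (tuples l s).Nodup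
  | 0 => by simp [tuples]
  | s+1 => by
    rw [tuples, List.nodup_flatMap]
    constructor
    · intro a _
      exact (nodup_tuples hl s).map (fun f g h => by simpa using h)
    · refine hl.pairwise_of_forall_ne ?_
      intro a _ b _ hab
      simp only [Function.onFun, List.disjoint_left, List.mem_map]
      rintro x ⟨g, _, rfl⟩ ⟨g', _, h⟩
      exact hab (by simpa using (List.cons_eq_cons.1 h.symm).1)

lemma flatten_fixed_length {L : ℕ} (hL : 0 < L) : ∀ {f g : List Word},
    (∀ a ∈ f, a.length = L) → (∀ a ∈ g, a.length = L) → f.flatten = g.flatten → f = g := by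
  intro f
  induction f with
  | nil =>
    intro g _ hg h
    match g with
    | [] => rfl
    | b :: g' =>
      exfalso
      have : (List.nil (α := Bool)).length = (b ++ g'.flatten).length := by
        simpa using congrArg List.length h
      simp [hg b (by simp)] at this
      omega
  | cons a f' ih =>
    intro g hf hg h
    match g with
    | [] =>
      exfalso
      have := congrArg List.length h
      simp [hf a (by simp)] at this
      omega
    | b :: g' =>
      simp only [List.flatten_cons] at h
      have hlen : a.length = b.length := by rw [hf a (by simp), hg b (by simp)]
      obtain ⟨h1, h2⟩ := List.append_inj h hlen
      have := ih (fun x hx => hf x (by simp [hx])) (fun x hx => hg x (by simp [hx])) h2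
      rw [h1, this]


/-! ### windows -/

def windowZ (x : ℤ → Bool) (a : ℤ) (ℓ : ℕ) : Word := (List.range ℓ).map fun j : ℕ => x (a + (j : ℤ))

@[simp] lemma windowZ_length (x a ℓ) : (windowZ x a ℓ).length = ℓ := by
  rw [windowZ, List.length_map, List.length_range]

lemma windowZ_getElem (x a ℓ) (j : ℕ) (h : j < ℓ) :
    (windowZ x a ℓ)[j]'(by simpa using h) = x (a + j) := by
  simp only [windowZ, List.getElem_map, List.getElem_range]

lemma windowZ_drop_take (x : ℤ → Bool) (a : ℤ) (ℓ i j : ℕ) (h : i + j ≤ ℓ) :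
    ((windowZ x a ℓ).drop i).take j = windowZ x (a + i) j := by
  apply List.ext_getElem
  · simp; omega
  · intro t h1 h2
    simp only [List.getElem_take, List.getElem_drop]
    rw [windowZ_getElem x a ℓ (i + t) (by simp at h1; omega),
        windowZ_getElem x (a+i) j t (by simpa using h2)]
    push_cast; ring_nf

lemma windowZ_sub_of_eq_append {x : ℤ → Bool} {a : ℤ} {ℓ : ℕ} {s u r : Word}
    (h : windowZ x a ℓ = s ++ u ++ r) : u = windowZ x (a + s.length) u.length := by
  have hlen : s.length + (u.length + r.length) = ℓ := by
    have := congrArg List.length h; simp [List.length_append] at this; omega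
  have h1 : ((windowZ x a ℓ).drop s.length).take u.length = u := by
    rw [h, List.append_assoc, List.drop_left' rfl, List.take_left]
  calc u = ((windowZ x a ℓ).drop s.length).take u.length := h1.symm
    _ = windowZ x (a + s.length) u.length := windowZ_drop_take _ _ _ _ _ (by omega)

lemma windowZ_eq_iff {x y : ℤ → Bool} {a : ℤ} {ℓ : ℕ} :
    windowZ x a ℓ = windowZ y a ℓ ↔ ∀ j : ℕ, j < ℓ → x (a + j) = y (a + j) := by
  constructor
  · intro h j hj
    have h1 : (windowZ x a ℓ)[j]'(by simpa using hj) = (windowZ y a ℓ)[j]'(by simpa using hj) :=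
      List.getElem_of_eq h _
    rwa [windowZ_getElem _ _ _ j hj, windowZ_getElem _ _ _ j hj] at h1
  · intro h
    apply List.ext_getElem (by simp)
    intro t h1 h2
    rw [windowZ_getElem _ _ _ t (by simpa using h1), windowZ_getElem _ _ _ t (by simpa using h1)]
    exact h t (by simpa using h1)

/-! ### length/extraction helpers -/

lemma flatten_len {L : ℕ} (P : List Word) (h : ∀ p ∈ P, p.length = L) :
    P.flatten.length = P.length * L := by
  induction P with
  | nil => simp
  | cons p tl ih =>
    simp only [List.flatten_cons, List.length_append, List.length_cons]
    rw [h p (by simp), ih (fun q hq => h q (by simp [hq]))]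
    ring

lemma nodup_subset_length {l l' : List Word} (h : l.Nodup) (hsub : l ⊆ l') :
    l.length ≤ l'.length := by
  classical
  calc l.length = l.toFinset.card := (List.toFinset_card_of_nodup h).symm
    _ ≤ l'.toFinset.card := Finset.card_le_card (fun v hv => by
        simp only [List.mem_toFinset] at *; exact hsub hv)
    _ ≤ l'.length := l'.toFinset_card_le

lemma length_le_filter_add (l bad : List Word) (h : l.Nodup) :
    l.length ≤ (l.filter (fun v => decide (v ∉ bad))).length + bad.length := by
  classical
  have h1 : l.length = l.toFinset.card := (List.toFinset_card_of_nodup h).symm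
  have h2 : (l.toFinset.filter (fun v => v ∈ bad)).card
      + (l.toFinset.filter (fun v => v ∉ bad)).card = l.toFinset.card :=
    Finset.card_filter_add_card_filter_not (p := fun v => v ∈ bad)
  have h3 : (l.toFinset.filter (fun v => v ∈ bad)).card ≤ bad.length := by
    calc (l.toFinset.filter (fun v => v ∈ bad)).card ≤ bad.toFinset.card :=
          Finset.card_le_card (fun v hv => by
            simp only [Finset.mem_filter, List.mem_toFinset] at *; exact hv.2)
      _ ≤ bad.length := bad.toFinset_card_le
  have h4 : (l.toFinset.filter (fun v => v ∉ bad)).card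
      ≤ (l.filter (fun v => decide (v ∉ bad))).length := by
    calc (l.toFinset.filter (fun v => v ∉ bad)).card
        ≤ (l.filter (fun v => decide (v ∉ bad))).toFinset.card :=
          Finset.card_le_card (fun v hv => by
            simp only [Finset.mem_filter, List.mem_toFinset, List.mem_filter] at *
            exact ⟨hv.1, by simpa using hv.2⟩)
      _ ≤ _ := List.toFinset_card_le _
  omega

/-- key block-extraction lemma -/
lemma block_extract {L : ℕ} (hL : 0 < L) : ∀ (P : List Word), (∀ p ∈ P, p.length = L) →
    ∀ (s u r : Word), P.flatten = s ++ u ++ r → 2*L ≤ u.length →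
    ∃ i, i + L ≤ u.length ∧ (u.drop i).take L ∈ P := by
  intro P
  induction P with
  | nil =>
    intro _ s u r h hu
    have := congrArg List.length h
    simp at this; omega
  | cons p tl ih =>
    intro hlen s u r h hu
    have hp : p.length = L := hlen p (by simp)
    have hflat : p ++ tl.flatten = s ++ (u ++ r) := by
      simpa [List.append_assoc] using h
    by_cases hsL : L ≤ s.length
    · -- recurse into tl
      have hdrop := congrArg (List.drop L) hflat
      rw [List.drop_left' hp, List.drop_append_of_le_length hsL] at hdrop
      obtain ⟨i, hi, hm⟩ := ih (fun q hq => hlen q (by simp [hq])) (s.drop L) u r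
        (by simpa [List.append_assoc] using hdrop) hu
      exact ⟨i, hi, by simp [hm]⟩
    · push_neg at hsL
      match tl, (by
          -- tl ≠ []
          have := congrArg List.length hflat
          simp [hp] at this
          intro hnil
          rw [hnil] at this
          simp at this
          omega : tl ≠ []) with
      | q :: tl2, _ =>
        have hq : q.length = L := hlen q (by simp)
        refine ⟨L - s.length, by omega, ?_⟩
        have hur : u ++ r = p.drop s.length ++ (q ++ tl2.flatten) := by
          have hdrop := congrArg (List.drop s.length) hflat
          rw [List.drop_append_of_le_length (by rw [hp]; omega), List.drop_left' rfl] at hdrop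
          simpa using hdrop.symm
        have hlen2 : (p.drop s.length).length = L - s.length := by simp [hp]
        have h2 : (u ++ r).drop (L - s.length) = q ++ tl2.flatten := by
          rw [hur, List.drop_left' hlen2]
        have h3 : u.drop (L - s.length) ++ r = q ++ tl2.flatten := by
          rw [← h2, List.drop_append_of_le_length (by omega)]
        have h4 := congrArg (List.take L) h3
        rw [List.take_append_of_le_length (by simp; omega), List.take_left' hq] at h4
        rw [h4]; simp

/-! ### the construction -/

def badW (bk : ℤ → Bool) (L1 : ℕ) : List Word :=
  (List.range (L1+1)).map fun i : ℕ => windowZ bk (i : ℤ) L1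

def step (bk : ℤ → Bool) (k : ℕ) (Wk : List Word) : List Word :=
  ((tuples Wk (Wk.headI.length + (2^(k+1)+2) * Wk.length + 2^(k+2) + 5)).map
      fun f => Wk.flatten ++ f.flatten).filter
    (fun v => decide (v ∉ badW bk ((Wk.length + (Wk.headI.length + (2^(k+1)+2) * Wk.length + 2^(k+2) + 5)) * Wk.headI.length)))

def Wseq (b : ℕ → ℤ → Bool) : ℕ → List Word
  | 0 => [[false,false],[false,true],[true,false],[true,true]]
  | k+1 => step (b k) k (Wseq b k)

def Nb (b : ℕ → ℤ → Bool) (k : ℕ) : ℕ := (Wseq b k).length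
def Lb (b : ℕ → ℤ → Bool) (k : ℕ) : ℕ := ((Wseq b k).headI).length
def sb (b : ℕ → ℤ → Bool) (k : ℕ) : ℕ := Lb b k + (2^(k+1)+2) * Nb b k + 2^(k+2) + 5

lemma Wseq_succ (b : ℕ → ℤ → Bool) (k : ℕ) :
    Wseq b (k+1) = ((tuples (Wseq b k) (sb b k)).map
      fun f => (Wseq b k).flatten ++ f.flatten).filter
      (fun v => decide (v ∉ badW (b k) ((Nb b k + sb b k) * Lb b k))) := rfl

lemma mem_Wseq_succ {b k v} : v ∈ Wseq b (k+1) ↔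
    (∃ f ∈ tuples (Wseq b k) (sb b k), (Wseq b k).flatten ++ f.flatten = v)
    ∧ v ∉ badW (b k) ((Nb b k + sb b k) * Lb b k) := by
  rw [Wseq_succ, List.mem_filter]
  simp only [List.mem_map, decide_eq_true_eq]

lemma headI_mem {l : List Word} (h : l ≠ []) : l.headI ∈ l := by
  match l, h with
  | a :: t, _ => simp

/-! ### arithmetic -/

lemma arith2 {k N L s : ℕ} (hN : 4 ≤ N) (hL : 2 ≤ L)
    (hs : s = L + (2^(k+1)+2)*N + 2^(k+2) + 5) :
    (N+s)*L + 2 ≤ N^(s-2) := by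
  have e1 : 2 ≤ 2^(k+1) := by
    calc (2:ℕ) = 2^1 := by norm_num
    _ ≤ 2^(k+1) := Nat.pow_le_pow_right (by norm_num) (by omega)
  have e2 : 4 ≤ 2^(k+2) := by
    calc (4:ℕ) = 2^2 := by norm_num
    _ ≤ 2^(k+2) := Nat.pow_le_pow_right (by norm_num) (by omega)
  have h1 : (N+s)*L + 2 ≤ ((N+s)+1) * (L+1) := by nlinarith
  have h2 : (N+s)+1 ≤ 2^(N+s) := Nat.lt_two_pow_self
  have h3 : L+1 ≤ 2^L := Nat.lt_two_pow_self
  have h4 : ((N+s)+1) * (L+1) ≤ 2^(N+s) * 2^L := Nat.mul_le_mul h2 h3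
  have h5 : 2^(N+s) * 2^L = 2^(N+s+L) := by rw [← pow_add]
  have h6 : N + s + L ≤ 2*(s-2) := by
    have hNs : N + L + 5 ≤ s := by nlinarith
    omega
  have h7 : (2:ℕ)^(N+s+L) ≤ 2^(2*(s-2)) := Nat.pow_le_pow_right (by norm_num) h6
  have h8 : (2:ℕ)^(2*(s-2)) = 4^(s-2) := by
    rw [pow_mul]; norm_num
  have h9 : (4:ℕ)^(s-2) ≤ N^(s-2) := Nat.pow_le_pow_left hN _
  omega

lemma arith {k N L s N1 : ℕ} (hN : 4 ≤ N) (hL : 2 ≤ L)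
    (hs : s = L + (2^(k+1)+2)*N + 2^(k+2) + 5)
    (hinv : 2^((2^k+1) * L) ≤ N^(2^(k+1)))
    (hN1 : N^s ≤ N1 + ((N+s)*L + 1)) :
    4 ≤ N1 ∧ 2^((2^(k+1)+1) * ((N+s)*L)) ≤ N1^(2^(k+2)) := by
  have e2 : 4 ≤ 2^(k+2) := by
    calc (4:ℕ) = 2^2 := by norm_num
    _ ≤ 2^(k+2) := Nat.pow_le_pow_right (by norm_num) (by omega)
  have hs2 : 2 ≤ s := by omega
  have key := arith2 hN hL hs
  have hNs2 : N^(s-2) * N^2 = N^s := by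
    rw [← pow_add]; congr 1; omega
  have h16 : 16 ≤ N^2 := by nlinarith
  have hup : (N+s)*L + 1 + N^(s-2) ≤ N^s := by
    have h2X : (N+s)*L + 1 + N^(s-2) ≤ 2 * N^(s-2) := by omega
    have : 2 * N^(s-2) ≤ N^(s-2) * N^2 := by nlinarith [Nat.pow_pos (n := s-2) (show 0 < N by omega)]
    omega
  have hbig : N^(s-2) ≤ N1 := by omega
  have hN4 : 4 ≤ N^(s-2) := by
    have : 4 ≤ (N+s)*L + 2 := by nlinarith
    omega
  refine ⟨by omega, ?_⟩
  -- 2 * N1 ≥ N^s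
  have h2N1 : N^s ≤ 2 * N1 := by omega
  set E := 2^(k+2) with hE
  have hEpos : 0 < E := Nat.pow_pos (by norm_num)
  -- (2*N1)^E ≥ (N^s)^E = (N^(2^(k+1)))^(2*s) ≥ (2^((2^k+1)L))^(2*s)
  have hiter : (N^s)^E = (N^(2^(k+1)))^(2*s) := by
    rw [← pow_mul, ← pow_mul]; congr 1
    have : E = 2 * 2^(k+1) := by rw [hE]; ring
    rw [this]; ring
  have hlow : (2:ℕ)^((2^k+1)*L*(2*s)) ≤ (2*N1)^E := by
    calc (2:ℕ)^((2^k+1)*L*(2*s)) = (2^((2^k+1)*L))^(2*s) := by rw [← pow_mul]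
    _ ≤ (N^(2^(k+1)))^(2*s) := Nat.pow_le_pow_left hinv _
    _ = (N^s)^E := hiter.symm
    _ ≤ (2*N1)^E := Nat.pow_le_pow_left h2N1 _
  have hexp : E + (2^(k+1)+1) * ((N+s)*L) ≤ (2^k+1)*L*(2*s) := by
    have e1 : (1:ℕ) ≤ 2^k := Nat.one_le_two_pow
    have e21 : 2^(k+1) = 2 * 2^k := by ring
    have e22 : E = 4 * 2^k := by rw [hE]; ring
    -- reduces to s*L ≥ 4*2^k + (2*2^k+1)*N*L
    have hgoal : 4*2^k + (2*2^k+1)*N*L ≤ s*L := by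
      have hs' : 4*2^k + (2*2^k+2)*N ≤ s := by
        rw [hs, e21]
        have : 2^(k+2) = 4 * 2^k := by ring
        omega
      calc 4*2^k + (2*2^k+1)*N*L ≤ (4*2^k + (2*2^k+2)*N)*L := by nlinarith
      _ ≤ s*L := Nat.mul_le_mul_right _ hs'
    rw [e21, e22]
    nlinarith
  have hfin : (2:ℕ)^(E + (2^(k+1)+1) * ((N+s)*L)) ≤ (2*N1)^E := by
    calc (2:ℕ)^(E + (2^(k+1)+1) * ((N+s)*L)) ≤ 2^((2^k+1)*L*(2*s)) :=
      Nat.pow_le_pow_right (by norm_num) hexp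
    _ ≤ (2*N1)^E := hlow
  have : (2:ℕ)^E * 2^((2^(k+1)+1) * ((N+s)*L)) ≤ 2^E * N1^E := by
    rw [← pow_add]
    calc _ ≤ (2*N1)^E := hfin
    _ = 2^E * N1^E := mul_pow 2 N1 E
  exact Nat.le_of_mul_le_mul_left this (Nat.pow_pos (by norm_num))

/-! ### main invariants -/

structure Facts (b : ℕ → ℤ → Bool) (k : ℕ) : Prop where
  ne : Wseq b k ≠ []
  nodup : (Wseq b k).Nodup
  len : ∀ w ∈ Wseq b k, w.length = Lb b k
  two : 2 ≤ Lb b k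
  four : 4 ≤ Nb b k
  inv : 2^((2^k+1) * Lb b k) ≤ (Nb b k)^(2^(k+1))

lemma facts (b : ℕ → ℤ → Bool) : ∀ k, Facts b k := by
  intro k
  induction k with
  | zero =>
    refine ⟨by simp [Wseq], by simp [Wseq], ?_, by simp [Lb, Wseq], by simp [Nb, Wseq], by simp [Nb, Lb, Wseq]⟩
    intro w hw
    simp only [Wseq, List.mem_cons, List.mem_singleton] at hw
    rcases hw with rfl | rfl | rfl | rfl | h
    all_goals first | rfl | simp at h
  | succ k ih =>
    set W := Wseq b k with hW
    set N := Nb b k with hN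
    set L := Lb b k with hL
    set s := sb b k with hs
    have hLpos : 0 < L := by have := ih.two; omega
    -- lengths of tuple elements
    have htup : ∀ f ∈ tuples W s, (∀ a ∈ f, a.length = L) ∧ f.length = s := by
      intro f hf
      obtain ⟨h1, h2⟩ := mem_tuples.1 hf
      exact ⟨fun a ha => ih.len a (h2 a ha), h1⟩
    have hflatW : W.flatten.length = N * L := flatten_len W ih.len
    -- all candidates have length (N+s)*L
    have hcl : ∀ v ∈ Wseq b (k+1), v.length = (N + s) * L := by
      intro v hv
      obtain ⟨⟨f, hf, rfl⟩, -⟩ := mem_Wseq_succ.1 hv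
      obtain ⟨hfa, hfl⟩ := htup f hf
      rw [List.length_append, hflatW, flatten_len f hfa, hfl]
      ring
    -- candidate list and its properties
    have hcand_nodup : ((tuples W s).map fun f => W.flatten ++ f.flatten).Nodup := by
      refine (nodup_tuples ih.nodup s).map_on ?_
      intro f hf g hg hfg
      have h1 : f.flatten = g.flatten := List.append_cancel_left hfg
      exact flatten_fixed_length hLpos (htup f hf).1 (htup g hg).1 h1
    have hcand_len : ((tuples W s).map fun f => W.flatten ++ f.flatten).length = N^s := by
      rw [List.length_map, length_tuples]
      rfl
    have hbad_len : (badW (b k) ((N + s) * L)).length = (N+s)*L + 1 := by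
      rw [badW, List.length_map, List.length_range]
    have hcount : N^s ≤ Nb b (k+1) + ((N+s)*L + 1) := by
      have := length_le_filter_add ((tuples W s).map fun f => W.flatten ++ f.flatten)
        (badW (b k) ((N + s) * L)) hcand_nodup
      rw [hcand_len, hbad_len] at this
      rw [Nb, Wseq_succ]
      convert this using 2
    obtain ⟨h4, hinv'⟩ := arith (k := k) ih.four ih.two rfl ih.inv hcount
    have hne : Wseq b (k+1) ≠ [] := by
      intro hnil
      rw [Nb, hnil] at h4
      simp at h4
    have hLsucc : Lb b (k+1) = (N + s) * L := hcl _ (headI_mem hne)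
    refine ⟨hne, ?_, fun w hw => by rw [hLsucc]; exact hcl w hw, ?_, h4, ?_⟩
    · rw [Wseq_succ]
      exact hcand_nodup.filter _
    · rw [hLsucc]
      nlinarith [ih.two, ih.four, Nat.one_le_two_pow (n := k+1), Nat.one_le_two_pow (n := k+2)]
    · rw [hLsucc]
      exact hinv'

lemma len_succ (b : ℕ → ℤ → Bool) (k : ℕ) :
    ∀ v ∈ Wseq b (k+1), v.length = (Nb b k + sb b k) * Lb b k := by
  intro v hv
  obtain ⟨⟨f, hf, rfl⟩, -⟩ := mem_Wseq_succ.1 hv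
  obtain ⟨h1, h2⟩ := mem_tuples.1 hf
  rw [List.length_append, flatten_len (Wseq b k) (facts b k).len,
    flatten_len f (fun a ha => (facts b k).len a (h2 a ha)), h1]
  show Nb b k * Lb b k + _ = _
  ring

lemma Lb_succ (b : ℕ → ℤ → Bool) (k : ℕ) : Lb b (k+1) = (Nb b k + sb b k) * Lb b k :=
  len_succ b k _ (headI_mem (facts b (k+1)).ne)

lemma Lb_two_mul (b : ℕ → ℤ → Bool) (k : ℕ) : 2 * Lb b k ≤ Lb b (k+1) := by
  rw [Lb_succ]
  have := (facts b k).four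
  nlinarith

lemma Lb_mono (b : ℕ → ℤ → Bool) : Monotone (Lb b) := by
  apply monotone_nat_of_le_succ
  intro k
  have h := Lb_two_mul b k
  omega

lemma Lb_big (b : ℕ → ℤ → Bool) (k : ℕ) : 2^(k+1) ≤ Lb b k := by
  induction k with
  | zero => have := (facts b 0).two; simpa using this
  | succ k ih =>
    have := Lb_two_mul b k
    calc 2^(k+2) = 2 * 2^(k+1) := by ring
    _ ≤ 2 * Lb b k := by omega
    _ ≤ Lb b (k+1) := Lb_two_mul b k

lemma sq_ge (b : ℕ → ℤ → Bool) (k : ℕ) : 2^(Lb b k) ≤ (Nb b k)^2 := by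
  have h := (facts b k).inv
  have h1 : ((2:ℕ)^(Lb b k))^(2^k) ≤ ((Nb b k)^2)^(2^k) := by
    calc ((2:ℕ)^(Lb b k))^(2^k) = 2^(2^k * Lb b k) := by rw [← pow_mul, Nat.mul_comm]
    _ ≤ 2^((2^k+1) * Lb b k) := Nat.pow_le_pow_right (by norm_num) (by nlinarith)
    _ ≤ (Nb b k)^(2^(k+1)) := h
    _ = ((Nb b k)^2)^(2^k) := by rw [← pow_mul]; congr 1; ring
  exact le_of_pow_le_pow_left₀ (Nat.pow_pos (n := k) (by norm_num)).ne' (by positivity) h1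

/-! ### structural lemmas -/

lemma flatten_of_parts {S : List Word} : ∀ {Q : List Word},
    (∀ a ∈ Q, ∃ P : List Word, (∀ p ∈ P, p ∈ S) ∧ a = P.flatten) →
    ∃ P : List Word, (∀ p ∈ P, p ∈ S) ∧ Q.flatten = P.flatten := by
  intro Q
  induction Q with
  | nil => exact fun _ => ⟨[], by simp, by simp⟩
  | cons a tl ih =>
    intro h
    obtain ⟨Pa, hPa, ha⟩ := h a (by simp)
    obtain ⟨Pt, hPt, ht⟩ := ih (fun x hx => h x (by simp [hx]))
    refine ⟨Pa ++ Pt, ?_, ?_⟩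
    · intro p hp
      rcases List.mem_append.1 hp with h' | h'
      · exact hPa p h'
      · exact hPt p h'
    · rw [List.flatten_cons, ha, ht, List.flatten_append]

lemma exists_parts (b : ℕ → ℤ → Bool) (j : ℕ) : ∀ m, j ≤ m → ∀ w ∈ Wseq b m,
    ∃ P : List Word, (∀ p ∈ P, p ∈ Wseq b j) ∧ w = P.flatten := by
  intro m
  induction m with
  | zero =>
    intro hj w hw
    interval_cases j
    exact ⟨[w], by simpa using hw, by simp⟩
  | succ m ih =>
    intro hj w hw
    rcases Nat.lt_or_ge j (m+1) with hjm | hjm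
    · obtain ⟨⟨f, hf, rfl⟩, -⟩ := mem_Wseq_succ.1 hw
      obtain ⟨-, h2⟩ := mem_tuples.1 hf
      have hparts : ∀ a ∈ Wseq b m ++ f, ∃ P : List Word, (∀ p ∈ P, p ∈ Wseq b j) ∧ a = P.flatten := by
        intro a ha
        rcases List.mem_append.1 ha with h' | h'
        · exact ih (by omega) a h'
        · exact ih (by omega) a (h2 a h')
      obtain ⟨P, hP, hPf⟩ := flatten_of_parts hparts
      exact ⟨P, hP, by rw [← List.flatten_append, hPf]⟩
    · have : j = m+1 := by omega
      subst this
      exact ⟨[w], by simpa using hw, by simp⟩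

lemma infix_lower (b : ℕ → ℤ → Bool) (k : ℕ) {w v : Word}
    (hw : w ∈ Wseq b k) (hv : v ∈ Wseq b (k+1)) : w <:+: v := by
  obtain ⟨⟨f, hf, rfl⟩, -⟩ := mem_Wseq_succ.1 hv
  exact (List.infix_of_mem_flatten hw).trans ((Wseq b k).flatten.prefix_append f.flatten).isInfix

/-- any pair of level-k words appears consecutively inside some level-(k+1) word -/
lemma two_le_sb (b : ℕ → ℤ → Bool) (k : ℕ) : 2 ≤ sb b k := by
  have hd : 0 < 2^(k+2) := Nat.pow_pos (by norm_num)
  rw [sb]; omega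

lemma pair_infix (b : ℕ → ℤ → Bool) (k : ℕ) {u v : Word}
    (hu : u ∈ Wseq b k) (hv : v ∈ Wseq b k) :
    ∃ w ∈ Wseq b (k+1), u ++ v <:+: w := by
  classical
  have hLpos : 0 < Lb b k := by have := (facts b k).two; omega
  have hcons_len : ∀ t (_ : t ∈ tuples (Wseq b k) (sb b k - 2)) a,
      a ∈ u :: v :: t → a.length = Lb b k := by
    intro t ht a ha
    rcases List.mem_cons.1 ha with rfl | ha
    · exact (facts b k).len a hu
    rcases List.mem_cons.1 ha with rfl | ha
    · exact (facts b k).len a hv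
    · exact (facts b k).len a ((mem_tuples.1 ht).2 a ha)
  have hmem : ∀ g ∈ tuples (Wseq b k) (sb b k - 2),
      (Wseq b k).flatten ++ (u :: v :: g).flatten
        ∈ (tuples (Wseq b k) (sb b k)).map fun f => (Wseq b k).flatten ++ f.flatten := by
    intro g hg
    obtain ⟨h1, h2⟩ := mem_tuples.1 hg
    refine List.mem_map.2 ⟨u :: v :: g, mem_tuples.2 ⟨?_, ?_⟩, rfl⟩
    · simp only [List.length_cons, h1]
      have := two_le_sb b k
      omega
    · intro a ha
      rcases List.mem_cons.1 ha with rfl | ha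
      · exact hu
      rcases List.mem_cons.1 ha with rfl | ha
      · exact hv
      · exact h2 a ha
  have hnodup : ((tuples (Wseq b k) (sb b k - 2)).map
      (fun g => (Wseq b k).flatten ++ (u :: v :: g).flatten)).Nodup := by
    refine (nodup_tuples (facts b k).nodup _).map_on ?_
    intro g hg g' hg' hfg
    have h1 : (u :: v :: g).flatten = (u :: v :: g').flatten := List.append_cancel_left hfg
    have := flatten_fixed_length hLpos (hcons_len g hg) (hcons_len g' hg') h1
    simpa using this
  have hexists : ∃ g ∈ tuples (Wseq b k) (sb b k - 2),
      (Wseq b k).flatten ++ (u :: v :: g).flatten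
        ∉ badW (b k) ((Nb b k + sb b k) * Lb b k) := by
    by_contra hcon
    push_neg at hcon
    have hsub : ((tuples (Wseq b k) (sb b k - 2)).map
        (fun g => (Wseq b k).flatten ++ (u :: v :: g).flatten))
        ⊆ badW (b k) ((Nb b k + sb b k) * Lb b k) := by
      intro x hx
      obtain ⟨g, hg, rfl⟩ := List.mem_map.1 hx
      exact hcon g hg
    have hle := nodup_subset_length hnodup hsub
    rw [List.length_map, length_tuples, badW, List.length_map, List.length_range] at hle
    have harith := arith2 (k := k) (facts b k).four (facts b k).two
      (rfl : sb b k = Lb b k + (2^(k+1)+2)*(Nb b k) + 2^(k+2) + 5)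
    have : (Wseq b k).length = Nb b k := rfl
    rw [this] at hle
    omega
  obtain ⟨g, hg, hxbad⟩ := hexists
  refine ⟨(Wseq b k).flatten ++ (u :: v :: g).flatten, ?_, ?_⟩
  · rw [Wseq_succ, List.mem_filter]
    exact ⟨hmem g hg, by simpa using hxbad⟩
  · have h1 : u ++ v <:+: (u :: v :: g).flatten := by
      rw [List.flatten_cons, List.flatten_cons, ← List.append_assoc]
      exact ((u ++ v).prefix_append g.flatten).isInfix
    exact h1.trans (List.suffix_append _ _).isInfix

/-! ### language and the subshift -/

def Lang (b : ℕ → ℤ → Bool) (u : Word) : Prop := ∃ k, ∃ w ∈ Wseq b k, u <:+: w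

lemma mem_not_bad {b k v} (hv : v ∈ Wseq b (k+1)) :
    v ∉ badW (b k) ((Nb b k + sb b k) * Lb b k) := (mem_Wseq_succ.1 hv).2

lemma mem_badW {bk L1 v} : v ∈ badW bk L1 ↔ ∃ i : ℕ, i ≤ L1 ∧ v = windowZ bk (i : ℤ) L1 := by
  rw [badW]
  simp only [List.mem_map, List.mem_range]
  constructor
  · rintro ⟨i, hi, rfl⟩; exact ⟨i, by omega, rfl⟩
  · rintro ⟨i, hi, rfl⟩; exact ⟨i, by omega, rfl⟩

/-- the window of `b k` of length `2 L_{k+1}` at the origin is not in the language -/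
lemma killed (b : ℕ → ℤ → Bool) (k : ℕ) : ¬ Lang b (windowZ (b k) 0 (2 * Lb b (k+1))) := by
  rintro ⟨m, w, hw, hinf⟩
  have hL1pos : 0 < Lb b (k+1) := by have := (facts b (k+1)).two; omega
  have hulen : (windowZ (b k) 0 (2 * Lb b (k+1))).length = 2 * Lb b (k+1) := by simp
  rcases Nat.lt_or_ge m (k+2) with hm | hm
  · have h1 : (windowZ (b k) 0 (2 * Lb b (k+1))).length ≤ w.length := hinf.length_le
    rw [hulen, (facts b m).len w hw] at h1
    have h2 : Lb b m ≤ Lb b (k+1) := Lb_mono b (by omega)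
    omega
  · obtain ⟨P, hP, rfl⟩ := exists_parts b (k+1) m (by omega) w hw
    obtain ⟨sfx, pfx, heq⟩ := hinf
    obtain ⟨i, hi, hblock⟩ := block_extract hL1pos P
      (fun p hp => (facts b (k+1)).len p (hP p hp)) sfx _ pfx heq.symm (by rw [hulen])
    rw [hulen] at hi
    have hwin : ((windowZ (b k) 0 (2 * Lb b (k+1))).drop i).take (Lb b (k+1))
        = windowZ (b k) (i : ℤ) (Lb b (k+1)) := by
      rw [windowZ_drop_take _ _ _ _ _ hi, zero_add]
    have hmem : ((windowZ (b k) 0 (2 * Lb b (k+1))).drop i).take (Lb b (k+1)) ∈ Wseq b (k+1) :=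
      hP _ hblock
    apply mem_not_bad hmem
    rw [← Lb_succ]
    exact mem_badW.2 ⟨i, by omega, hwin⟩

/-- every word of the language of length `3 L_{j+1}` contains a complete level-`(j+1)` block -/
lemma exists_block_of_lang (b : ℕ → ℤ → Bool) (j : ℕ) {u : Word} (hu : Lang b u)
    (hlen : u.length = 3 * Lb b (j+1)) :
    ∃ i, i + Lb b (j+1) ≤ u.length ∧ (u.drop i).take (Lb b (j+1)) ∈ Wseq b (j+1) := by
  obtain ⟨m, w, hw, hinf⟩ := hu
  have hL1pos : 0 < Lb b (j+1) := by have := (facts b (j+1)).two; omega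
  rcases Nat.lt_or_ge m (j+1) with hm | hm
  · exfalso
    have h1 : u.length ≤ w.length := hinf.length_le
    rw [(facts b m).len w hw] at h1
    have h2 : Lb b m ≤ Lb b (j+1) := Lb_mono b (by omega)
    omega
  · obtain ⟨P, hP, rfl⟩ := exists_parts b (j+1) m hm w hw
    obtain ⟨sfx, pfx, heq⟩ := hinf
    obtain ⟨i, hi, hblock⟩ := block_extract hL1pos P
      (fun p hp => (facts b (j+1)).len p (hP p hp)) sfx _ pfx heq.symm (by omega)
    exact ⟨i, hi, hP _ hblock⟩

/-- the subshift -/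
def Xset (b : ℕ → ℤ → Bool) : Set (ℤ → Bool) := {x | ∀ (a : ℤ) (ℓ : ℕ), Lang b (windowZ x a ℓ)}

lemma lang_mem {b k w} (hw : w ∈ Wseq b k) : Lang b w := ⟨k, w, hw, List.infix_refl w⟩

/-- every word of the language occurs in every point of `Xset`, at a controlled position -/
lemma occurs {b : ℕ → ℤ → Bool} {x : ℤ → Bool} (hx : x ∈ Xset b) {u : Word} (hu : Lang b u) :
    ∃ a : ℤ, windowZ x a u.length = u := by
  obtain ⟨k0, w0, hw0, hinf0⟩ := hu
  have hv : Lang b (windowZ x 0 (3 * Lb b (k0+1))) := hx 0 _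
  obtain ⟨i, hi, hblock⟩ := exists_block_of_lang b k0 hv (by simp)
  have hwin : ((windowZ x 0 (3 * Lb b (k0+1))).drop i).take (Lb b (k0+1))
      = windowZ x (i : ℤ) (Lb b (k0+1)) := by
    rw [windowZ_drop_take _ _ _ _ _ (by simpa using hi), zero_add]
  have hu_in : u <:+: windowZ x (i : ℤ) (Lb b (k0+1)) := by
    rw [← hwin]
    exact hinf0.trans (infix_lower b k0 hw0 (hwin ▸ hblock))
  obtain ⟨sfx, pfx, heq⟩ := hu_in
  exact ⟨(i : ℤ) + sfx.length, (windowZ_sub_of_eq_append heq.symm).symm⟩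

/-! ### topology of the subshift -/

def shiftBy (c : ℤ) (x : ℤ → Bool) : ℤ → Bool := fun i => x (i + c)

lemma windowZ_shiftBy (c : ℤ) (x : ℤ → Bool) (a : ℤ) (ℓ : ℕ) :
    windowZ (shiftBy c x) a ℓ = windowZ x (a + c) ℓ := by
  apply List.ext_getElem (by simp)
  intro t h1 h2
  rw [windowZ_getElem _ _ _ t (by simpa using h1), windowZ_getElem _ _ _ t (by simpa using h1)]
  show x (a + t + c) = x (a + c + t)
  ring_nf

lemma shiftMap_eq : shiftMap = shiftBy 1 := by
  funext x i
  rfl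

lemma shiftBy_shiftBy (c d : ℤ) (x) : shiftBy c (shiftBy d x) = shiftBy (c + d) x := by
  funext i
  show x (i + c + d) = x (i + (c + d))
  ring_nf

lemma shiftBy_mem_Xset {b : ℕ → ℤ → Bool} {x : ℤ → Bool} (hx : x ∈ Xset b) (c : ℤ) :
    shiftBy c x ∈ Xset b := by
  intro a ℓ
  rw [windowZ_shiftBy]
  exact hx _ _

lemma shiftMap_image_Xset (b : ℕ → ℤ → Bool) : shiftMap '' Xset b = Xset b := by
  apply Set.eq_of_subset_of_subset
  · rintro _ ⟨x, hx, rfl⟩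
    rw [shiftMap_eq]
    exact shiftBy_mem_Xset hx 1
  · intro x hx
    refine ⟨shiftBy (-1) x, shiftBy_mem_Xset hx (-1), ?_⟩
    rw [shiftMap_eq, shiftBy_shiftBy]
    norm_num
    funext i
    show x (i + 0) = x i
    norm_num

lemma isClosed_Xset (b : ℕ → ℤ → Bool) : IsClosed (Xset b) := by
  rw [← isOpen_compl_iff]
  rw [isOpen_iff_forall_mem_open]
  intro x hx
  simp only [Set.mem_compl_iff, Xset, Set.mem_setOf_eq, not_forall] at hx
  obtain ⟨a, ℓ, hbad⟩ := hx
  refine ⟨⋂ j ∈ Finset.range ℓ, {y : ℤ → Bool | y (a + (j:ℤ)) = x (a + (j:ℤ))}, ?_, ?_, ?_⟩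
  · intro y hy
    simp only [Set.mem_iInter, Set.mem_setOf_eq] at hy
    simp only [Set.mem_compl_iff, Xset, Set.mem_setOf_eq, not_forall]
    refine ⟨a, ℓ, ?_⟩
    have : windowZ y a ℓ = windowZ x a ℓ := windowZ_eq_iff.2 fun j hj => hy j (Finset.mem_range.2 hj)
    rwa [this]
  · apply isOpen_biInter_finset
    intro j _
    show IsOpen ((fun y : ℤ → Bool => y (a + (j:ℤ))) ⁻¹' {x (a + (j:ℤ))})
    exact (continuous_apply (a + (j:ℤ))).isOpen_preimage _ (isOpen_discrete _)
  · simp only [Set.mem_iInter, Set.mem_setOf_eq]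
    intro j _
    trivial

lemma isCompact_Xset (b : ℕ → ℤ → Bool) : IsCompact (Xset b) :=
  (isClosed_Xset b).isCompact

/-- Nonemptiness of the subshift -/
lemma nonempty_Xset (b : ℕ → ℤ → Bool) : (Xset b).Nonempty := by
  classical
  -- approximating points: the first level-K word, placed on [-K, -K + L_K)
  set y : ℕ → (ℤ → Bool) := fun K i =>
    if h : 0 ≤ i + K ∧ i + K < ((Wseq b K).headI.length : ℤ) then
      (Wseq b K).headI.getD (i + K).toNat false else false with hy
  obtain ⟨x, -, hx⟩ := (isCompact_univ (X := ℤ → Bool)).exists_clusterPt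
    (f := Filter.map y Filter.atTop) (by simp)
  refine ⟨x, ?_⟩
  intro a ℓ
  -- the cylinder around x on [a, a+ℓ) is a neighborhood
  set V : Set (ℤ → Bool) := ⋂ j ∈ Finset.range ℓ, {z : ℤ → Bool | z (a + (j:ℤ)) = x (a + (j:ℤ))}
    with hV
  have hVopen : IsOpen V := by
    apply isOpen_biInter_finset
    intro j _
    show IsOpen ((fun y : ℤ → Bool => y (a + (j:ℤ))) ⁻¹' {x (a + (j:ℤ))})
    exact (continuous_apply (a + (j:ℤ))).isOpen_preimage _ (isOpen_discrete _)
  have hVx : x ∈ V := by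
    simp only [hV, Set.mem_iInter, Set.mem_setOf_eq]
    intro j _
    trivial
  obtain ⟨z, hz1, K, hK, rfl⟩ :=
    (clusterPt_iff_nonempty.1 hx) (hVopen.mem_nhds hVx) (Filter.image_mem_map (Filter.mem_atTop (a.natAbs + ℓ + 1)))
  have hK' : a.natAbs + ℓ + 1 ≤ K := hK
  have hLK : 2 * K ≤ Lb b K := by
    have h1 := Lb_big b K
    have h2 : K + 1 ≤ 2 ^ K := Nat.lt_two_pow_self
    have h3 : 2^(K+1) = 2 * 2^K := by ring
    omega
  have hlenW : (Wseq b K).headI.length = Lb b K := rfl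
  have hrange : ∀ j : ℕ, j < ℓ → 0 ≤ a + (j:ℤ) + K ∧ a + (j:ℤ) + K < ((Wseq b K).headI.length : ℤ) := by
    intro j hj
    rw [hlenW]
    omega
  have hwindow : windowZ x a ℓ = windowZ (y K) a ℓ := by
    rw [windowZ_eq_iff]
    intro j hj
    exact (Set.mem_iInter.1 (Set.mem_iInter.1 hz1 j) (Finset.mem_range.2 hj)).symm
  have hsub : windowZ (y K) a ℓ = (((Wseq b K).headI.drop (a + K).toNat).take ℓ) := by
    apply List.ext_getElem
    · simp only [windowZ_length, List.length_take, List.length_drop, hlenW]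
      omega
    · intro t h1 h2
      have ht : t < ℓ := by simpa using h1
      rw [windowZ_getElem _ _ _ t (by simpa using h1)]
      rw [List.getElem_take, List.getElem_drop]
      obtain ⟨hr1, hr2⟩ := hrange t ht
      rw [hy]
      simp only
      rw [dif_pos ⟨by omega, by omega⟩]
      rw [List.getD_eq_getElem _ _ (by rw [hlenW] at hr2 ⊢; omega)]
      congr 1
      omega
  rw [hwindow, hsub]
  refine ⟨K, (Wseq b K).headI, headI_mem (facts b K).ne, ?_⟩
  exact (List.take_prefix _ _).isInfix.trans (List.drop_suffix _ _).isInfix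

/-- killed points are not in the subshift -/
lemma killed_not_mem (b : ℕ → ℤ → Bool) (k : ℕ) : b k ∉ Xset b := by
  intro h
  exact killed b k (h 0 (2 * Lb b (k+1)))

/-- points with a prescribed window at the origin -/
lemma exists_point_with_window (b : ℕ → ℤ → Bool) {w : Word} {k : ℕ} (hw : w ∈ Wseq b k) :
    ∃ x ∈ Xset b, windowZ x 0 w.length = w := by
  obtain ⟨x0, hx0⟩ := nonempty_Xset b
  obtain ⟨a, ha⟩ := occurs hx0 (lang_mem hw)
  refine ⟨shiftBy a x0, shiftBy_mem_Xset hx0 a, ?_⟩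
  rw [windowZ_shiftBy, zero_add, ha]

/-- the minimality engine: any nonempty closed shift-invariant subset of `Xset` is all of it -/
lemma minimal_engine (b : ℕ → ℤ → Bool) (Y : Set (ℤ → Bool)) (hYX : Y ⊆ Xset b)
    (hYne : Y.Nonempty) (hYcl : IsClosed Y) (hYinv : shiftMap '' Y = Y) : Y = Xset b := by
  -- Y is invariant under all integer shifts
  have hshift : ∀ c : ℤ, ∀ y ∈ Y, shiftBy c y ∈ Y := by
    have hfwd : ∀ y ∈ Y, shiftBy 1 y ∈ Y := by
      intro y hy
      rw [← shiftMap_eq, ← hYinv]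
      exact ⟨y, hy, rfl⟩
    have hbwd : ∀ y ∈ Y, shiftBy (-1) y ∈ Y := by
      intro y hy
      rw [← hYinv] at hy
      obtain ⟨z, hz, rfl⟩ := hy
      have : shiftBy (-1) (shiftMap z) = z := by
        rw [shiftMap_eq, shiftBy_shiftBy]
        norm_num
        funext i
        show z (i + 0) = z i
        norm_num
      rwa [this]
    intro c
    induction c using Int.induction_on with
    | zero => intro y hy; have : shiftBy 0 y = y := by funext i; show y (i+0) = y i; norm_num
              rwa [this]
    | succ c ih =>
      intro y hy
      have h1 := hfwd (shiftBy c y) (ih y hy)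
      rw [shiftBy_shiftBy] at h1
      convert h1 using 2
      ring
    | pred c ih =>
      intro y hy
      have h1 := hbwd (shiftBy (-c) y) (ih y hy)
      rw [shiftBy_shiftBy] at h1
      convert h1 using 2
      ring
  obtain ⟨y, hy⟩ := hYne
  apply Set.eq_of_subset_of_subset hYX
  intro z hz
  rw [← hYcl.closure_eq]
  rw [mem_closure_iff]
  intro O hO hzO
  obtain ⟨I, u, hu, hsub⟩ := isOpen_pi_iff.1 hO z hzO
  -- choose m so that I ⊆ [-m, m]
  set m : ℕ := I.sup fun i => i.natAbs with hm
  have hIm : ∀ i ∈ I, -(m:ℤ) ≤ i ∧ i ≤ m := by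
    intro i hi
    have : i.natAbs ≤ m := Finset.le_sup (f := fun i : ℤ => i.natAbs) hi
    omega
  -- the window of z on [-m, m] occurs in y
  have hlang : Lang b (windowZ z (-(m:ℤ)) (2*m+1)) := hz _ _
  obtain ⟨a, ha⟩ := occurs (hYX hy) hlang
  rw [windowZ_length] at ha
  set y' := shiftBy (a + m) y with hy'
  have hy'Y : y' ∈ Y := hshift _ y hy
  have hagree : ∀ j : ℕ, j < 2*m+1 → y' (-(m:ℤ) + j) = z (-(m:ℤ) + j) := by
    have : windowZ y' (-(m:ℤ)) (2*m+1) = windowZ z (-(m:ℤ)) (2*m+1) := by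
      rw [hy', windowZ_shiftBy]
      rw [show -(m:ℤ) + (a + m) = a by ring]
      exact ha
    exact windowZ_eq_iff.1 this
  refine ⟨y', ?_, hy'Y⟩
  apply hsub
  rw [Set.mem_pi]
  intro i hi
  obtain ⟨h1, h2⟩ := hIm i hi
  have hj : i = -(m:ℤ) + ((i + m).toNat : ℤ) := by omega
  have : y' i = z i := by
    rw [hj]
    exact hagree (i + m).toNat (by omega)
  rw [this]
  exact (hu i hi).2

lemma shiftMap_iterate (j : ℕ) (x : ℤ → Bool) : shiftMap^[j] x = shiftBy (j:ℤ) x := by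
  induction j with
  | zero =>
    rw [Function.iterate_zero_apply]
    funext i
    show x i = x (i + 0)
    norm_num
  | succ j ih =>
    rw [Function.iterate_succ_apply', ih, shiftMap_eq, shiftBy_shiftBy]
    congr 1
    push_cast
    ring

lemma shiftMap_iterate_eval (j : ℕ) (x : ℤ → Bool) : shiftMap^[j] x 0 = x j := by
  rw [shiftMap_iterate]
  show x (0 + j) = x j
  norm_num

end ShiftProof

open ShiftProof

/-- Let `f` be a homeomorphism of a compact metric space `M` and suppose that for some
`n ≥ 1` there is a compact set `K` with `f^[n] '' K = K` such that `f^[n]` restricted to `K`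
is topologically conjugate (via a homeomorphism `e : K ≃ₜ Σ`) to the full shift on two
symbols.  Then for every countable `A ⊆ M` there is a nonempty compact `f`-invariant set
`K*` disjoint from `A`, on which `f` is minimal, and with positive topological entropy. -/
theorem exists_minimal_posEntropy_invariant_set_avoiding_countable
    {M : Type*} [MetricSpace M] [CompactSpace M] (f : M ≃ₜ M)
    (n : ℕ) (hn : 1 ≤ n) (K : Set M) (hKcomp : IsCompact K)
    (hKinv : (⇑f)^[n] '' K = K)
    (e : K ≃ₜ (ℤ → Bool))
    (hconj : ∀ (x : M) (hx : x ∈ K) (hx' : (⇑f)^[n] x ∈ K),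
      e ⟨(⇑f)^[n] x, hx'⟩ = shiftMap (e ⟨x, hx⟩))
    (A : Set M) (hA : A.Countable) :
    ∃ Kstar : Set M, Kstar.Nonempty ∧ IsCompact Kstar ∧ ⇑f '' Kstar = Kstar ∧
      Kstar ∩ A = ∅ ∧ IsMinimalSet (⇑f) Kstar ∧ 0 < netEntropy (⇑f) Kstar := by
  classical
  haveI : CompactSpace ↥K := isCompact_iff_compactSpace.1 hKcomp
  -- the countable set to avoid in the shift
  set Abig : Set M := ⋃ j ∈ Finset.range n, (⇑f)^[j] ⁻¹' A with hAbig
  have hAbigC : Abig.Countable := by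
    refine Set.Countable.biUnion (Set.to_countable _) ?_
    intro j _
    exact hA.preimage (f.injective.iterate j)
  set B : Set (ℤ → Bool) := ⇑e '' (Subtype.val ⁻¹' Abig) with hB
  have hBC : B.Countable := ((hAbigC.preimage Subtype.val_injective).image _)
  obtain ⟨b, hb⟩ := Set.Countable.exists_eq_range (hBC.insert (fun _ => false))
    (Set.insert_nonempty _ _)
  have hBsub : B ⊆ Set.range b := by
    rw [← hb]
    exact Set.subset_insert _ _
  -- basic facts about f^[n] on K
  have hmapsK : ∀ p ∈ K, (⇑f)^[n] p ∈ K := by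
    intro p hp
    rw [← hKinv]
    exact Set.mem_image_of_mem _ hp
  have hstep : ∀ x : ℤ → Bool, (⇑f)^[n] ↑(e.symm x) = ↑(e.symm (shiftMap x)) := by
    intro x
    have h1 := hconj ↑(e.symm x) (e.symm x).2 (hmapsK _ (e.symm x).2)
    rw [Subtype.coe_eta, Homeomorph.apply_symm_apply] at h1
    have h2 : e.symm (e ⟨(⇑f)^[n] ↑(e.symm x), hmapsK _ (e.symm x).2⟩) =
        e.symm (shiftMap x) := by rw [h1]
    rw [Homeomorph.symm_apply_apply] at h2
    rw [← h2]
  have hstep_iter : ∀ (j : ℕ) (x : ℤ → Bool),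
      (⇑f)^[n * j] ↑(e.symm x) = ↑(e.symm (shiftMap^[j] x)) := by
    intro j
    induction j with
    | zero => intro x; simp
    | succ j ih =>
      intro x
      have h1 : n * (j+1) = n*j + n := by ring
      rw [h1, Function.iterate_add_apply, hstep x, ih (shiftMap x),
        Function.iterate_succ_apply]
  -- the subshift avoiding B
  set Xb : Set (ℤ → Bool) := Xset b with hXb
  have hXBdisj : ∀ x ∈ Xb, x ∉ B := by
    intro x hx hxB
    obtain ⟨k, rfl⟩ := hBsub hxB
    exact killed_not_mem b k hx
  -- the basic invariant set
  set Λ : Set M := Subtype.val '' (e.symm '' Xb) with hΛ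
  have hΛK : Λ ⊆ K := by
    rintro _ ⟨q, -, rfl⟩
    exact q.2
  have hΛcomp : IsCompact Λ :=
    (((isCompact_Xset b).image e.symm.continuous).image continuous_subtype_val)
  have hΛne : Λ.Nonempty := ((nonempty_Xset b).image _).image _
  have hΛinv : (⇑f)^[n] '' Λ = Λ := by
    apply Set.eq_of_subset_of_subset
    · rintro _ ⟨_, ⟨_, ⟨x, hx, rfl⟩, rfl⟩, rfl⟩
      rw [hstep x]
      refine ⟨e.symm (shiftMap x), ⟨shiftMap x, ?_, rfl⟩, rfl⟩
      rw [hXb, ← shiftMap_image_Xset b]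
      exact ⟨x, hx, rfl⟩
    · rintro _ ⟨_, ⟨x, hx, rfl⟩, rfl⟩
      rw [hXb, ← shiftMap_image_Xset b] at hx
      obtain ⟨x', hx', rfl⟩ := hx
      exact ⟨↑(e.symm x'), ⟨e.symm x', ⟨x', hx', rfl⟩, rfl⟩, hstep x'⟩
  -- the full invariant set
  set Kstar : Set M := ⋃ j ∈ Finset.range n, (⇑f)^[j] '' Λ with hKstar
  have hjcont : ∀ j : ℕ, Continuous ((⇑f)^[j]) := fun j => f.continuous.iterate j
  have hΛsub : Λ ⊆ Kstar := by
    intro p hp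
    rw [hKstar]
    refine Set.mem_biUnion (Finset.mem_range.2 hn) ?_
    simpa using hp
  have hKstar_comp : IsCompact Kstar := by
    rw [hKstar]
    apply (Finset.range n).finite_toSet.isCompact_biUnion
    intro j _
    exact hΛcomp.image (hjcont j)
  have hKstar_ne : Kstar.Nonempty := hΛne.mono hΛsub
  have hmem_Kstar : ∀ p ∈ Kstar, ∃ j < n, ∃ q ∈ Λ, (⇑f)^[j] q = p := by
    intro p hp
    rw [hKstar] at hp
    obtain ⟨j, hj, q, hq, rfl⟩ := by simpa using hp
    exact ⟨j, by simpa using hj, q, hq, rfl⟩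
  have hKstar_inv : ⇑f '' Kstar = Kstar := by
    apply Set.eq_of_subset_of_subset
    · rintro _ ⟨p, hp, rfl⟩
      obtain ⟨j, hj, q, hq, rfl⟩ := hmem_Kstar p hp
      have h1 : f ((⇑f)^[j] q) = (⇑f)^[j+1] q := (Function.iterate_succ_apply' (⇑f) j q).symm
      rw [h1]
      rcases Nat.lt_or_ge (j+1) n with h2 | h2
      · exact Set.mem_biUnion (Finset.mem_range.2 h2) ⟨q, hq, rfl⟩
      · have hjn : j + 1 = n := by omega
        rw [hjn]
        have : (⇑f)^[n] q ∈ Λ := by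
          rw [← hΛinv]; exact ⟨q, hq, rfl⟩
        exact hΛsub this
    · intro p hp
      obtain ⟨j, hj, q, hq, rfl⟩ := hmem_Kstar p hp
      rcases Nat.eq_zero_or_pos j with rfl | hjpos
      · -- p = q ∈ Λ = f^[n] '' Λ, n ≥ 1
        rw [← hΛinv] at hq
        obtain ⟨q', hq', rfl⟩ := hq
        have h1 : (⇑f)^[n] q' = f ((⇑f)^[n-1] q') := by
          conv_lhs => rw [show n = (n-1)+1 by omega]
          exact Function.iterate_succ_apply' (⇑f) (n-1) q'
        simp only [Function.iterate_zero_apply]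
        rw [h1]
        refine ⟨(⇑f)^[n-1] q', ?_, rfl⟩
        exact Set.mem_biUnion (Finset.mem_range.2 (by omega)) ⟨q', hq', rfl⟩
      · have h1 : (⇑f)^[j] q = f ((⇑f)^[j-1] q) := by
          conv_lhs => rw [show j = (j-1)+1 by omega]
          exact Function.iterate_succ_apply' (⇑f) (j-1) q
        rw [h1]
        refine ⟨(⇑f)^[j-1] q, ?_, rfl⟩
        exact Set.mem_biUnion (Finset.mem_range.2 (by omega)) ⟨q, hq, rfl⟩
  have hKstar_avoid : Kstar ∩ A = ∅ := by
    rw [Set.eq_empty_iff_forall_notMem]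
    rintro p ⟨hp, hpA⟩
    obtain ⟨j, hj, q, hq, rfl⟩ := hmem_Kstar p hp
    obtain ⟨_, ⟨x, hx, rfl⟩, rfl⟩ := hq
    apply hXBdisj x hx
    rw [hB]
    refine ⟨e.symm x, ?_, by rw [Homeomorph.apply_symm_apply]⟩
    show ↑(e.symm x) ∈ Abig
    rw [hAbig]
    exact Set.mem_biUnion (Finset.mem_range.2 hj) hpA
  -- minimality
  have hMin : IsMinimalSet (⇑f) Kstar := by
    refine ⟨hKstar_ne, hKstar_comp, hKstar_inv, ?_⟩
    intro Λ' hΛ'sub hΛ'ne hΛ'comp hΛ'inv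
    have hΛ'iter : ∀ m : ℕ, (⇑f)^[m] '' Λ' = Λ' := by
      intro m
      induction m with
      | zero => simp
      | succ m ih =>
        rw [Function.iterate_succ', Set.image_comp, ih, hΛ'inv]
    -- Λ' meets Λ
    obtain ⟨p, hp⟩ := hΛ'ne
    obtain ⟨j, hj, q, hq, rfl⟩ := hmem_Kstar _ (hΛ'sub hp)
    have hr1 : (⇑f)^[n-j] ((⇑f)^[j] q) = (⇑f)^[n] q := by
      rw [← Function.iterate_add_apply]
      congr 1
      omega
    have hrΛ : (⇑f)^[n] q ∈ Λ := by
      rw [← hΛinv]; exact ⟨q, hq, rfl⟩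
    have hrΛ' : (⇑f)^[n] q ∈ Λ' := by
      rw [← hr1, ← hΛ'iter (n-j)]
      exact ⟨_, hp, rfl⟩
    -- pull back to the shift
    set Y : Set (ℤ → Bool) := {x ∈ Xb | ↑(e.symm x) ∈ Λ'} with hY
    have hYX : Y ⊆ Xb := fun x hx => hx.1
    have hYne : Y.Nonempty := by
      obtain ⟨qq, ⟨x, hx, rfl⟩, hval⟩ := hrΛ
      exact ⟨x, hx, by rw [hval]; exact hrΛ'⟩
    have hYcl : IsClosed Y := by
      have : Y = Xb ∩ ((fun x : ℤ → Bool => (↑(e.symm x) : M)) ⁻¹' Λ') := rfl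
      rw [this]
      exact (isClosed_Xset b).inter
        ((hΛ'comp.isClosed).preimage (continuous_subtype_val.comp e.symm.continuous))
    have hYinv : shiftMap '' Y = Y := by
      apply Set.eq_of_subset_of_subset
      · rintro _ ⟨x, ⟨hx1, hx2⟩, rfl⟩
        constructor
        · rw [hXb, ← shiftMap_image_Xset b]; exact ⟨x, hx1, rfl⟩
        · rw [← hstep x]
          rw [← hΛ'iter n]
          exact ⟨_, hx2, rfl⟩
      · rintro x ⟨hx1, hx2⟩
        have hx1' := hx1
        rw [hXb, ← shiftMap_image_Xset b] at hx1'
        obtain ⟨x', hx', rfl⟩ := hx1'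
        refine ⟨x', ⟨hx', ?_⟩, rfl⟩
        -- f^[n] ↑(e.symm x') = ↑(e.symm (σ x')) ∈ Λ' = f^[n] '' Λ'
        have h2 : (⇑f)^[n] ↑(e.symm x') ∈ Λ' := by rw [hstep x']; exact hx2
        rw [← hΛ'iter n] at h2
        obtain ⟨z, hz, hz2⟩ := h2
        have : z = ↑(e.symm x') := (f.injective.iterate n) hz2
        rwa [← this]
    have hYall : Y = Xb := minimal_engine b Y hYX hYne hYcl hYinv
    -- Λ ⊆ Λ' and conclude
    have hΛΛ' : Λ ⊆ Λ' := by
      rintro _ ⟨qq, ⟨x, hx, rfl⟩, rfl⟩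
      rw [← hYall] at hx
      exact hx.2
    apply Set.eq_of_subset_of_subset hΛ'sub
    intro p hp
    obtain ⟨j, hj, q, hq, rfl⟩ := hmem_Kstar p hp
    rw [← hΛ'iter j]
    exact ⟨q, hΛΛ' hq, rfl⟩
  refine ⟨Kstar, hKstar_ne, hKstar_comp, hKstar_inv, hKstar_avoid, hMin, ?_⟩
  -- entropy: a separating entourage
  set D : Set (M × M) := (fun q : ↥K × ↥K => ((q.1 : M), (q.2 : M))) ''
    {q : ↥K × ↥K | e q.1 0 ≠ e q.2 0} with hD
  have hDcomp : IsCompact D := by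
    have h1 : IsClosed {q : ↥K × ↥K | e q.1 0 ≠ e q.2 0} := by
      have h2 : {q : ↥K × ↥K | e q.1 0 ≠ e q.2 0} =
          (fun q : ↥K × ↥K => (e q.1 0, e q.2 0)) ⁻¹' (Set.diagonal Bool)ᶜ := by
        ext q
        simp [Set.mem_diagonal_iff]
      rw [h2]
      apply IsClosed.preimage
      · exact Continuous.prodMk
          ((continuous_apply (0:ℤ)).comp (e.continuous.comp continuous_fst))
          ((continuous_apply (0:ℤ)).comp (e.continuous.comp continuous_snd))
      · exact isClosed_discrete _
    exact h1.isCompact.image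
      ((continuous_subtype_val.comp continuous_fst).prodMk
        (continuous_subtype_val.comp continuous_snd))
  have hDdiag : Set.diagonal M ⊆ Dᶜ := by
    rintro ⟨p, p'⟩ hdiag hmem
    obtain ⟨q, hq, heq⟩ := hmem
    have hpq : p = p' := hdiag
    have h1 : (q.1 : M) = (q.2 : M) := by
      have e1 : (q.1 : M) = p := congrArg Prod.fst heq
      have e2 : (q.2 : M) = p' := congrArg Prod.snd heq
      rw [e1, e2, hpq]
    exact hq (by rw [Subtype.val_injective h1])
  have hDc_mem : Dᶜ ∈ uniformity M := by
    rw [← nhdsSet_diagonal_eq_uniformity]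
    exact hDcomp.isClosed.isOpen_compl.mem_nhdsSet.2 hDdiag
  obtain ⟨V, hV, hVsymm, hVcomp⟩ := comp_symm_mem_uniformity_sets hDc_mem
  -- the netMaxcard lower bound at times n * L_{k+1}
  have hsep : ∀ k : ℕ, (Nb b (k+1) : ℕ∞) ≤ netMaxcard (⇑f) Kstar V (n * Lb b (k+1)) := by
    intro k
    have hch : ∀ w : Word, ∃ x : ℤ → Bool,
        w ∈ Wseq b (k+1) → (x ∈ Xset b ∧ windowZ x 0 w.length = w) := by
      intro w
      by_cases hw : w ∈ Wseq b (k+1)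
      · obtain ⟨x, hx1, hx2⟩ := exists_point_with_window b hw
        exact ⟨x, fun _ => ⟨hx1, hx2⟩⟩
      · exact ⟨fun _ => false, fun h => absurd h hw⟩
    choose xw hxw using hch
    set pt : Word → M := fun w => ↑(e.symm (xw w)) with hpt
    have hptΛ : ∀ w ∈ Wseq b (k+1), pt w ∈ Kstar := fun w hw =>
      hΛsub ⟨e.symm (xw w), ⟨xw w, (hxw w hw).1, rfl⟩, rfl⟩
    have hdiff : ∀ w ∈ Wseq b (k+1), ∀ w' ∈ Wseq b (k+1), w ≠ w' →
        ∃ j : ℕ, j < Lb b (k+1) ∧ xw w ((j:ℤ)) ≠ xw w' ((j:ℤ)) := by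
      intro w hw w' hw' hne
      by_contra hcon
      push_neg at hcon
      apply hne
      have h1 := (hxw w hw).2
      have h2 := (hxw w' hw').2
      have hlw : w.length = Lb b (k+1) := (facts b (k+1)).len w hw
      have hlw' : w'.length = Lb b (k+1) := (facts b (k+1)).len w' hw'
      have : windowZ (xw w) 0 (Lb b (k+1)) = windowZ (xw w') 0 (Lb b (k+1)) := by
        rw [windowZ_eq_iff]
        intro j hj
        have := hcon j hj
        simpa using this
      rw [← h1, ← h2, hlw, hlw', this]
    have hsepD : ∀ w ∈ Wseq b (k+1), ∀ w' ∈ Wseq b (k+1), w ≠ w' →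
        ∃ t, t < n * Lb b (k+1) ∧ ((⇑f)^[t] (pt w), (⇑f)^[t] (pt w')) ∈ D := by
      intro w hw w' hw' hne
      obtain ⟨j, hj, hjne⟩ := hdiff w hw w' hw' hne
      have h0n : 0 < n := hn
      refine ⟨n*j, (mul_lt_mul_iff_right₀ h0n).2 hj, ?_⟩
      rw [hpt]
      simp only
      rw [hstep_iter j (xw w), hstep_iter j (xw w')]
      refine ⟨(e.symm (shiftMap^[j] (xw w)), e.symm (shiftMap^[j] (xw w'))), ?_, rfl⟩
      show e _ 0 ≠ e _ 0
      rw [Homeomorph.apply_symm_apply, Homeomorph.apply_symm_apply,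
        shiftMap_iterate_eval, shiftMap_iterate_eval]
      exact hjne
    have hinj : ∀ w ∈ Wseq b (k+1), ∀ w' ∈ Wseq b (k+1), pt w = pt w' → w = w' := by
      intro w hw w' hw' hpteq
      by_contra hne
      obtain ⟨t, ht, htD⟩ := hsepD w hw w' hw' hne
      rw [hpteq] at htD
      exact hDdiag (show ((⇑f)^[t] (pt w'), (⇑f)^[t] (pt w')) ∈ Set.diagonal M from rfl) htD
    set S : Finset M := ((Wseq b (k+1)).map pt).toFinset with hS
    have hnodupS : ((Wseq b (k+1)).map pt).Nodup := (facts b (k+1)).nodup.map_on hinj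
    have hScard : S.card = Nb b (k+1) := by
      rw [hS, List.toFinset_card_of_nodup hnodupS, List.length_map]
      rfl
    have hmemS : ∀ p ∈ S, ∃ w ∈ Wseq b (k+1), pt w = p := by
      intro p hp
      rw [hS, List.mem_toFinset, List.mem_map] at hp
      exact hp
    have hnet : IsDynNetIn (⇑f) Kstar V (n * Lb b (k+1)) ↑S := by
      constructor
      · intro p hp
        obtain ⟨w, hw, rfl⟩ := hmemS p hp
        exact hptΛ w hw
      · intro p hp q hq hpq
        obtain ⟨w, hw, rfl⟩ := hmemS p hp
        obtain ⟨w', hw', rfl⟩ := hmemS q hq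
        have hne : w ≠ w' := fun h => hpq (by rw [h])
        obtain ⟨t, ht, htD⟩ := hsepD w hw w' hw' hne
        simp only [Set.disjoint_left]
        intro z hz1 hz2
        simp only [UniformSpace.ball, Set.mem_preimage] at hz1 hz2
        have h1 : ((⇑f)^[t] (pt w), (⇑f)^[t] z) ∈ V :=
          (mem_dynEntourage.1 hz1) t ht
        have h2 : ((⇑f)^[t] (pt w'), (⇑f)^[t] z) ∈ V :=
          (mem_dynEntourage.1 hz2) t ht
        have h3 : ((⇑f)^[t] (pt w), (⇑f)^[t] (pt w')) ∈ SetRel.comp V V :=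
          ⟨(⇑f)^[t] z, h1, Std.Symm.symm (self := hVsymm) _ _ h2⟩
        exact hVcomp h3 htD
    have := hnet.card_le_netMaxcard
    rwa [hScard] at this
  -- conclude: positive entropy
  set c0 : EReal := ((Real.log 2 / (2 * n) : ℝ) : EReal) with hc0
  have hc0pos : (0:EReal) < c0 := by
    have h1 : (0:ℝ) < Real.log 2 / (2*(n:ℝ)) := by
      apply div_pos (Real.log_pos (by norm_num))
      have : (0:ℝ) < (n:ℝ) := by exact_mod_cast hn
      linarith
    exact EReal.coe_pos.2 h1
  have hperk : ∀ k : ℕ,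
      c0 ≤ ENNReal.log (netMaxcard (⇑f) Kstar V (n * Lb b (k+1))) / ((n * Lb b (k+1) : ℕ) : EReal) := by
    intro k
    have hL2 : 2 ≤ Lb b (k+1) := (facts b (k+1)).two
    have hq1 : 0 < n * Lb b (k+1) := by positivity
    rw [EReal.le_div_iff_mul_le (by exact_mod_cast hq1) (EReal.natCast_ne_top _)]
    have hlogmono : ENNReal.log ((Nb b (k+1) : ℕ∞) : ℝ≥0∞)
        ≤ ENNReal.log (netMaxcard (⇑f) Kstar V (n * Lb b (k+1))) :=
      ENNReal.log_monotone (ENat.toENNReal_mono (hsep k))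
    refine le_trans ?_ hlogmono
    have hN4 : 4 ≤ Nb b (k+1) := (facts b (k+1)).four
    have hcast : (((Nb b (k+1)) : ℕ∞) : ℝ≥0∞) = ENNReal.ofReal ((Nb b (k+1) : ℝ)) := by
      rw [ENNReal.ofReal_natCast]
      norm_cast
    rw [hcast, ENNReal.log_ofReal_of_pos (by positivity)]
    rw [← EReal.coe_coe_eq_natCast, hc0, ← EReal.coe_mul, EReal.coe_le_coe_iff]
    -- real inequality
    have h2L : ((2:ℝ))^(Lb b (k+1)) ≤ ((Nb b (k+1) : ℝ))^2 := by
      exact_mod_cast sq_ge b (k+1)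
    have hlog2 : (Lb b (k+1) : ℝ) * Real.log 2 ≤ 2 * Real.log (Nb b (k+1)) := by
      have := Real.log_le_log (by positivity) h2L
      rwa [Real.log_pow, Real.log_pow] at this
    have hn0 : (0:ℝ) < n := by exact_mod_cast hn
    have heq : Real.log 2 / (2*(n:ℝ)) * ((n * Lb b (k+1) : ℕ) : ℝ)
        = ((Lb b (k+1) : ℝ) * Real.log 2) / 2 := by
      push_cast
      field_simp
    rw [heq]
    linarith
  have hlimsup : c0 ≤ netEntropyEntourage (⇑f) Kstar V := by
    have hfreq : ∃ᶠ q in Filter.atTop,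
        c0 ≤ ENNReal.log (netMaxcard (⇑f) Kstar V q) / (q : EReal) := by
      rw [Filter.frequently_atTop]
      intro a
      refine ⟨n * Lb b (a+1), ?_, hperk a⟩
      have h1 := Lb_big b (a+1)
      have h2 : a + 1 ≤ 2^(a+1) := (Nat.lt_two_pow_self (n := a+1)).le
      have h3 : 2^(a+2) = 2 * 2^(a+1) := by ring
      have h4 : Lb b (a+1) ≤ n * Lb b (a+1) := Nat.le_mul_of_pos_left _ (by omega)
      omega
    exact Filter.le_limsup_of_frequently_le' hfreq
  have hfinal : netEntropyEntourage (⇑f) Kstar V ≤ netEntropy (⇑f) Kstar :=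
    le_iSup₂ (f := fun U (_ : U ∈ uniformity M) => netEntropyEntourage (⇑f) Kstar U) V hV
  exact lt_of_lt_of_le hc0pos (le_trans hlimsup hfinal)
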